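/- arXiv:1302.1340 — 2 statements merged into one kernel-verified Lean document; each statement's English description precedes it below -/
import Mathlib

section
/- If C is a non-empty, closed subset of δX, then there exists a unique F-filter φ on X such that φ̂ = C. -/
open Set

variable {X : Type*} [Nonempty X] [TopologicalSpace X] [DiscreteTopology X]

/-- The set `X(f,r) = {x ∈ X : |f(x)| ≤ r}`. -/
def XSet (f : BoundedContinuousFunction X ℂ) (r : ℝ) : Set X := {x | ‖f x‖ ≤ r}

/-- An `F`-family on `X`: a nonempty collection of nonempty subsets of `X` such that for every
member `A ≠ X` there are `B` in the collection and `f ∈ F` with `f(B) = {0}`,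
`f(X \ A) = {1}`. -/
def FFamily (F : StarSubalgebra ℂ (BoundedContinuousFunction X ℂ)) (𝒜 : Set (Set X)) : Prop :=
  𝒜.Nonempty ∧ (∀ A ∈ 𝒜, A.Nonempty) ∧
    ∀ A ∈ 𝒜, A ≠ Set.univ →
      ∃ B ∈ 𝒜, ∃ f ∈ F, (∀ x ∈ B, f x = 0) ∧ ∀ x ∉ A, f x = 1

/-- A filter on the set `X`, viewed as a collection of subsets. -/
def IsSetFilter (φ : Set (Set X)) : Prop :=
  φ.Nonempty ∧ (∀ A ∈ φ, ∀ B ∈ φ, A ∩ B ∈ φ) ∧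
    (∀ A ∈ φ, ∀ B : Set X, A ⊆ B → B ∈ φ) ∧ ∅ ∉ φ

/-- An `F`-filter on `X` is a filter which is also an `F`-family. -/
def FFilter (F : StarSubalgebra ℂ (BoundedContinuousFunction X ℂ)) (φ : Set (Set X)) : Prop :=
  IsSetFilter φ ∧ FFamily F φ

/-- An `F`-ultrafilter on `X` is an `F`-filter maximal with respect to inclusion. -/
def FUltrafilter (F : StarSubalgebra ℂ (BoundedContinuousFunction X ℂ)) (φ : Set (Set X)) : Prop :=
  FFilter F φ ∧ ∀ ψ : Set (Set X), FFilter F ψ → φ ⊆ ψ → ψ = φ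

/-- `F₀ = {f ∈ F : X(f,r) ≠ ∅ for all r > 0}`. -/
def FZero (F : StarSubalgebra ℂ (BoundedContinuousFunction X ℂ)) :
    Set (BoundedContinuousFunction X ℂ) :=
  {f | f ∈ F ∧ ∀ r : ℝ, 0 < r → (XSet f r).Nonempty}

/-- `Z(A) = {f ∈ F : f(x) = 0 for all x ∈ A}`. -/
def ZSet (F : StarSubalgebra ℂ (BoundedContinuousFunction X ℂ)) (A : Set X) :
    Set (BoundedContinuousFunction X ℂ) :=
  {f | f ∈ F ∧ ∀ x ∈ A, f x = 0}

/-- The finite intersection property. -/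
def FIP (𝒜 : Set (Set X)) : Prop :=
  ∀ s : Finset (Set X), ↑s ⊆ 𝒜 → s.Nonempty → (⋂₀ (s : Set (Set X))).Nonempty

/-- A filter base on `X`. -/
def IsFilterBase (ℬ : Set (Set X)) : Prop :=
  ℬ.Nonempty ∧ ∅ ∉ ℬ ∧ ∀ A ∈ ℬ, ∀ B ∈ ℬ, ∃ C ∈ ℬ, C ⊆ A ∩ B

/-- The filter generated by a filter base. -/
def genFilter (ℬ : Set (Set X)) : Set (Set X) :=
  {A | ∃ B ∈ ℬ, B ⊆ A}

/-- `δX`, the space of all `F`-ultrafilters on `X`. -/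
def Delta (F : StarSubalgebra ℂ (BoundedContinuousFunction X ℂ)) : Type _ :=
  {p : Set (Set X) // FUltrafilter F p}

/-- `Â = {p ∈ δX : A ∈ p}`. -/
def hatSet (F : StarSubalgebra ℂ (BoundedContinuousFunction X ℂ)) (A : Set X) :
    Set (Delta F) :=
  {p | A ∈ p.1}

/-- The topology on `δX` having `{Â : A ⊆ X}` as a base. -/
instance (F : StarSubalgebra ℂ (BoundedContinuousFunction X ℂ)) :
    TopologicalSpace (Delta F) :=
  TopologicalSpace.generateFrom {S | ∃ A : Set X, S = hatSet F A}

/-- For an `F`-filter `φ`, `φ̂ = {p ∈ δX : φ ⊆ p}`. -/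
def hatF (F : StarSubalgebra ℂ (BoundedContinuousFunction X ℂ)) (φ : Set (Set X)) :
    Set (Delta F) :=
  {p | φ ⊆ p.1}

/-- `τ(F)`, the weakest topology on `X` making every member of `F` continuous. -/
noncomputable def tauF (F : StarSubalgebra ℂ (BoundedContinuousFunction X ℂ)) : TopologicalSpace X :=
  ⨅ f ∈ (F : Set (BoundedContinuousFunction X ℂ)),
    TopologicalSpace.induced (fun x => f x) inferInstance

/-- `B(I) = {X(f,r) : f ∈ I, r > 0}` for an ideal `I` of `F`. -/
def BIdeal (F : StarSubalgebra ℂ (BoundedContinuousFunction X ℂ)) (I : Ideal F) :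
    Set (Set X) :=
  {S | ∃ f ∈ I, ∃ r : ℝ, 0 < r ∧ S = XSet (f : BoundedContinuousFunction X ℂ) r}

/-!
Call `B` `F`-separated from `A` when some `f ∈ F` vanishes on `B` and equals `1` off `A`. This
relation is stable under finite unions and intersections and under complementation (`1 - f`),
and, because the closed algebra `F` is stable under continuous functional calculus, it can be
interpolated: `B` is separated from some `C` that is separated from `A`. Hence `F`-ultrafilters
are normal: if `B` is separated from `A`, every `F`-ultrafilter contains `A` or `Bᶜ`.

Normality makes `δX` compact: an ultrafilter `𝒰` on `δX` converges to the `F`-ultrafilter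
generated by the sets `A` from which some `B` with `B̂ ∈ 𝒰` is separated. For closed `C ≠ ∅` the
required filter is `φ = ⋂ C`. If `A ∈ φ`, every point of `C` contains a set separated from `A`;
by compactness the hats of finitely many of them cover `C`, and their union, separated from `A` by
a product, lies in `φ`. Normality gives `φ̂ = C`, and `φ` is determined by `φ̂`: if an `F`-filter `ψ` misses
a member `A` of `φ`, then `ψ` and the complements of the sets separated from `A` extend to an
`F`-ultrafilter in `ψ̂ ∖ φ̂`.
-/

open BoundedContinuousFunction

section

variable {X : Type*}

namespace IsSetFilter

variable {φ : Set (Set X)} {A B : Set X}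

theorem univ_mem (h : IsSetFilter φ) : univ ∈ φ :=
  let ⟨A, hA⟩ := h.1
  h.2.2.1 A hA univ (subset_univ A)

theorem inter_mem (h : IsSetFilter φ) (hA : A ∈ φ) (hB : B ∈ φ) : A ∩ B ∈ φ := h.2.1 A hA B hB

theorem mem_of_superset (h : IsSetFilter φ) (hA : A ∈ φ) (hAB : A ⊆ B) : B ∈ φ :=
  h.2.2.1 A hA B hAB

theorem empty_notMem (h : IsSetFilter φ) : ∅ ∉ φ := h.2.2.2

theorem compl_notMem (h : IsSetFilter φ) (hA : A ∈ φ) : Aᶜ ∉ φ := fun hA' =>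
  h.empty_notMem (by simpa using h.inter_mem hA hA')

end IsSetFilter

theorem subset_genFilter (ℬ : Set (Set X)) : ℬ ⊆ genFilter ℬ := fun B hB => ⟨B, hB, subset_rfl⟩

end

section

variable {X : Type*} [TopologicalSpace X] {F : StarSubalgebra ℂ (X →ᵇ ℂ)}

noncomputable def BoundedContinuousFunction.evalStarAlgHom (x : X) : (X →ᵇ ℂ) →⋆ₐ[ℂ] ℂ where
  toFun f := f x
  map_one' := rfl
  map_mul' _ _ := rfl
  map_zero' := rfl
  map_add' _ _ := rfl
  commutes' _ := rfl
  map_star' _ := rfl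

theorem exists_mem_apply_eq_comp (hF : IsClosed (F : Set (X →ᵇ ℂ))) {a : X →ᵇ ℂ} (ha : a ∈ F)
    {θ : ℂ → ℂ} (hθ : Continuous θ) : ∃ g ∈ F, ∀ x, g x = θ (a x) := by
  refine ⟨cfc θ a, cfc_mem θ ha, fun x => ?_⟩
  calc cfc θ a x = evalStarAlgHom x (cfc θ a) := rfl
    _ = cfc θ (a x) := (evalStarAlgHom x).map_cfc θ a (hφ := (evalCLM ℂ x).continuous)
    _ = θ (a x) := cfc_algebraMap (R := ℂ) (a x) θ

@[simp]
theorem mem_xSet {f : X →ᵇ ℂ} {r : ℝ} {x : X} : x ∈ XSet f r ↔ ‖f x‖ ≤ r := Iff.rfl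

def FSeparated (F : StarSubalgebra ℂ (X →ᵇ ℂ)) (B A : Set X) : Prop :=
  ∃ f ∈ F, (∀ x ∈ B, f x = 0) ∧ ∀ x ∉ A, f x = 1

namespace FSeparated

variable {A A' B B' : Set X}

theorem subset (h : FSeparated F B A) : B ⊆ A := by
  obtain ⟨f, -, hf0, hf1⟩ := h
  intro x hxB
  by_contra hxA
  simpa [hf0 x hxB] using hf1 x hxA

theorem mono (h : FSeparated F B A) (hB : B' ⊆ B) (hA : A ⊆ A') : FSeparated F B' A' := by
  obtain ⟨f, hf, hf0, hf1⟩ := h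
  exact ⟨f, hf, fun x hx => hf0 x (hB hx), fun x hx => hf1 x fun h => hx (hA h)⟩

theorem compl (h : FSeparated F B A) : FSeparated F Aᶜ Bᶜ := by
  obtain ⟨f, hf, hf0, hf1⟩ := h
  refine ⟨1 - f, sub_mem (one_mem F) hf, fun x hx => ?_, fun x hx => ?_⟩
  · simp [hf1 x hx]
  · simp [hf0 x (not_not.1 hx)]

theorem union {B₁ B₂ : Set X} (h₁ : FSeparated F B₁ A) (h₂ : FSeparated F B₂ A) :
    FSeparated F (B₁ ∪ B₂) A := by
  obtain ⟨f₁, hf₁, hf₁0, hf₁1⟩ := h₁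
  obtain ⟨f₂, hf₂, hf₂0, hf₂1⟩ := h₂
  refine ⟨f₁ * f₂, mul_mem hf₁ hf₂, ?_, fun x hx => by simp [hf₁1 x hx, hf₂1 x hx]⟩
  rintro x (hx | hx)
  · simp [hf₁0 x hx]
  · simp [hf₂0 x hx]

theorem inter {A₁ A₂ B₁ B₂ : Set X} (h₁ : FSeparated F B₁ A₁) (h₂ : FSeparated F B₂ A₂) :
    FSeparated F (B₁ ∩ B₂) (A₁ ∩ A₂) := by
  obtain ⟨f₁, hf₁, hf₁0, hf₁1⟩ := h₁
  obtain ⟨f₂, hf₂, hf₂0, hf₂1⟩ := h₂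
  refine ⟨f₁ + f₂ - f₁ * f₂, sub_mem (add_mem hf₁ hf₂) (mul_mem hf₁ hf₂),
    fun x hx => by simp [hf₁0 x hx.1, hf₂0 x hx.2], fun x hx => ?_⟩
  rcases not_and_or.1 hx with hx | hx
  · simp [hf₁1 x hx]
  · simp [hf₂1 x hx]

end FSeparated

theorem fSeparated_univ (B : Set X) : FSeparated F B univ :=
  ⟨0, zero_mem F, fun _ _ => rfl, fun _ hx => absurd (mem_univ _) hx⟩

theorem fSeparated_empty (A : Set X) : FSeparated F ∅ A :=
  ⟨1, one_mem F, fun _ hx => absurd hx (notMem_empty _), fun _ _ => rfl⟩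

theorem fSeparated_biUnion {ι : Type*} (t : Finset ι) {B : ι → Set X} {A : Set X}
    (h : ∀ i ∈ t, FSeparated F (B i) A) : FSeparated F (⋃ i ∈ t, B i) A := by
  classical
  induction t using Finset.induction_on with
  | empty => simpa using fSeparated_empty A
  | insert i t _ ih =>
    rw [Finset.set_biUnion_insert]
    exact (h i (Finset.mem_insert_self i t)).union
      (ih fun j hj => h j (Finset.mem_insert_of_mem hj))

theorem fSeparated_xSet (hF : IsClosed (F : Set (X →ᵇ ℂ))) {f : X →ᵇ ℂ} (hf : f ∈ F)
    {s t : ℝ} (hst : s < t) : FSeparated F (XSet f s) (XSet f t) := by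
  obtain ⟨g, hg, hgf⟩ := exists_mem_apply_eq_comp hF hf
    (θ := fun z => ((max 0 (min 1 ((‖z‖ - s) / (t - s))) : ℝ) : ℂ)) (by fun_prop)
  refine ⟨g, hg, fun x hx => ?_, fun x hx => ?_⟩
  · have : (‖f x‖ - s) / (t - s) ≤ 0 :=
      div_nonpos_of_nonpos_of_nonneg (by simpa using hx) (by linarith)
    simp [hgf, this]
  · have : 1 ≤ (‖f x‖ - s) / (t - s) := by
      rw [one_le_div (by linarith)]
      simp at hx
      linarith
    simp [hgf, this]

theorem FSeparated.exists_between (hF : IsClosed (F : Set (X →ᵇ ℂ))) {A B : Set X}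
    (h : FSeparated F B A) : ∃ C, FSeparated F B C ∧ FSeparated F C A := by
  obtain ⟨g, hg, hg0, hg1⟩ := h
  have hB : B ⊆ XSet g 0 := fun x hx => by simp [hg0 x hx]
  have hA : XSet g (3 / 4) ⊆ A := fun x hx => by
    by_contra hxA
    norm_num [hg1 x hxA] at hx
  exact ⟨XSet g (1 / 2), (fSeparated_xSet hF hg (by norm_num)).mono hB subset_rfl,
    (fSeparated_xSet hF hg (by norm_num)).mono subset_rfl hA⟩

theorem FFilter.nonempty_of_mem {φ : Set (Set X)} (h : FFilter F φ) {A : Set X} (hA : A ∈ φ) :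
    A.Nonempty :=
  h.2.2.1 A hA

theorem FFilter.exists_fSeparated {φ : Set (Set X)} (h : FFilter F φ) {A : Set X} (hA : A ∈ φ) :
    ∃ B ∈ φ, FSeparated F B A := by
  rcases eq_or_ne A univ with rfl | hA'
  · exact ⟨univ, h.1.univ_mem, fSeparated_univ univ⟩
  · exact h.2.2.2 A hA hA'

def FBase (F : StarSubalgebra ℂ (X →ᵇ ℂ)) (ℬ : Set (Set X)) : Prop :=
  IsFilterBase ℬ ∧ ∀ B ∈ ℬ, ∃ B' ∈ ℬ, FSeparated F B' B

theorem FBase.fFilter_genFilter {ℬ : Set (Set X)} (h : FBase F ℬ) : FFilter F (genFilter ℬ) := by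
  obtain ⟨⟨⟨B₀, hB₀⟩, hempty, hdir⟩, hsep⟩ := h
  have hne : ∀ A ∈ genFilter ℬ, A.Nonempty := by
    rintro A ⟨B, hB, hBA⟩
    exact (nonempty_iff_ne_empty.2 fun hB' => hempty (hB' ▸ hB)).mono hBA
  refine ⟨⟨⟨B₀, subset_genFilter ℬ hB₀⟩, ?_, ?_, fun h => (hne ∅ h).ne_empty rfl⟩,
    ⟨B₀, subset_genFilter ℬ hB₀⟩, hne, ?_⟩
  · rintro A₁ ⟨B₁, hB₁, h₁⟩ A₂ ⟨B₂, hB₂, h₂⟩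
    obtain ⟨B, hB, hB₁₂⟩ := hdir B₁ hB₁ B₂ hB₂
    exact ⟨B, hB, hB₁₂.trans (inter_subset_inter h₁ h₂)⟩
  · rintro A ⟨B, hB, hBA⟩ A' hAA'
    exact ⟨B, hB, hBA.trans hAA'⟩
  · rintro A ⟨B, hB, hBA⟩ -
    obtain ⟨B', hB', hB'B⟩ := hsep B hB
    exact ⟨B', subset_genFilter ℬ hB', hB'B.mono subset_rfl hBA⟩

theorem FFilter.fBase {φ : Set (Set X)} (h : FFilter F φ) : FBase F φ :=
  ⟨⟨h.1.1, h.1.empty_notMem, fun _ hA _ hB => ⟨_, h.1.inter_mem hA hB, subset_rfl⟩⟩,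
    fun _ hA => h.exists_fSeparated hA⟩

theorem FBase.image2_inter {ℬ₁ ℬ₂ : Set (Set X)} (h₁ : FBase F ℬ₁) (h₂ : FBase F ℬ₂)
    (hmeet : ∀ B₁ ∈ ℬ₁, ∀ B₂ ∈ ℬ₂, (B₁ ∩ B₂).Nonempty) : FBase F (image2 (· ∩ ·) ℬ₁ ℬ₂) := by
  refine ⟨⟨h₁.1.1.image2 h₂.1.1, ?_, ?_⟩, ?_⟩
  · rintro ⟨B₁, hB₁, B₂, hB₂, h⟩
    exact (hmeet B₁ hB₁ B₂ hB₂).ne_empty h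
  · rintro _ ⟨B₁, hB₁, B₂, hB₂, rfl⟩ _ ⟨B₁', hB₁', B₂', hB₂', rfl⟩
    obtain ⟨C₁, hC₁, hC₁B⟩ := h₁.1.2.2 B₁ hB₁ B₁' hB₁'
    obtain ⟨C₂, hC₂, hC₂B⟩ := h₂.1.2.2 B₂ hB₂ B₂' hB₂'
    exact ⟨C₁ ∩ C₂, mem_image2_of_mem hC₁ hC₂,
      (inter_subset_inter hC₁B hC₂B).trans (inter_inter_inter_comm _ _ _ _).subset⟩
  · rintro _ ⟨B₁, hB₁, B₂, hB₂, rfl⟩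
    obtain ⟨C₁, hC₁, hC₁B⟩ := h₁.2 B₁ hB₁
    obtain ⟨C₂, hC₂, hC₂B⟩ := h₂.2 B₂ hB₂
    exact ⟨C₁ ∩ C₂, mem_image2_of_mem hC₁ hC₂, hC₁B.inter hC₂B⟩

theorem fBase_sUnion_of_isChain {c : Set (Set (Set X))} (hc : ∀ ψ ∈ c, FFilter F ψ)
    (hchain : IsChain (· ⊆ ·) c) (hne : c.Nonempty) : FBase F (⋃₀ c) := by
  obtain ⟨ψ₀, hψ₀⟩ := hne
  refine ⟨⟨⟨univ, mem_sUnion_of_mem (hc ψ₀ hψ₀).1.univ_mem hψ₀⟩, ?_, ?_⟩, ?_⟩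
  · rintro ⟨ψ, hψ, hempty⟩
    exact (hc ψ hψ).1.empty_notMem hempty
  · rintro A ⟨ψ₁, hψ₁, hA⟩ B ⟨ψ₂, hψ₂, hB⟩
    obtain ⟨ψ, hψ, hAψ, hBψ⟩ : ∃ ψ ∈ c, A ∈ ψ ∧ B ∈ ψ := by
      rcases hchain.total hψ₁ hψ₂ with h | h
      exacts [⟨ψ₂, hψ₂, h hA, hB⟩, ⟨ψ₁, hψ₁, hA, h hB⟩]
    exact ⟨A ∩ B, mem_sUnion_of_mem ((hc ψ hψ).1.inter_mem hAψ hBψ) hψ, subset_rfl⟩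
  · rintro A ⟨ψ, hψ, hA⟩
    obtain ⟨B, hB, hBA⟩ := (hc ψ hψ).exists_fSeparated hA
    exact ⟨B, mem_sUnion_of_mem hB hψ, hBA⟩

theorem FFilter.exists_fUltrafilter_superset {φ : Set (Set X)} (h : FFilter F φ) :
    ∃ p, FUltrafilter F p ∧ φ ⊆ p := by
  obtain ⟨p, hφp, hmax⟩ := zorn_subset_nonempty {ψ | FFilter F ψ}
    (fun c hc hchain hne => ⟨genFilter (⋃₀ c),
      (fBase_sUnion_of_isChain hc hchain hne).fFilter_genFilter,
      fun ψ hψ => (subset_sUnion_of_mem hψ).trans (subset_genFilter _)⟩) φ h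
  exact ⟨p, ⟨hmax.prop, fun ψ hψ hpψ => (hmax.eq_of_subset hψ hpψ).symm⟩, hφp⟩

theorem FFilter.exists_fUltrafilter_of_fBase {φ 𝒯 : Set (Set X)} (hφ : FFilter F φ)
    (h𝒯 : FBase F 𝒯) (hmeet : ∀ A ∈ φ, ∀ T ∈ 𝒯, (A ∩ T).Nonempty) :
    ∃ p, FUltrafilter F p ∧ φ ⊆ p ∧ 𝒯 ⊆ p := by
  obtain ⟨p, hp, hsub⟩ :=
    (hφ.fBase.image2_inter h𝒯 hmeet).fFilter_genFilter.exists_fUltrafilter_superset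
  obtain ⟨T₀, hT₀⟩ := h𝒯.1.1
  exact ⟨p, hp, fun A hA => hsub ⟨A ∩ T₀, mem_image2_of_mem hA hT₀, inter_subset_left⟩,
    fun T hT => hsub ⟨univ ∩ T, mem_image2_of_mem hφ.1.univ_mem hT, inter_subset_right⟩⟩

theorem FUltrafilter.mem_or_compl_mem (hF : IsClosed (F : Set (X →ᵇ ℂ))) {p : Set (Set X)}
    (hp : FUltrafilter F p) {A B : Set X} (h : FSeparated F B A) : A ∈ p ∨ Bᶜ ∈ p := by
  by_cases hB : Bᶜ ∈ p
  · exact Or.inr hB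
  have hmeet : ∀ E ∈ p, (E ∩ B).Nonempty := fun E hE =>
    by simpa using inter_compl_nonempty_iff.2 fun hEB => hB (hp.1.1.mem_of_superset hE hEB)
  have h𝒯 : FBase F {T | FSeparated F B T} := by
    refine ⟨⟨⟨univ, fSeparated_univ B⟩, fun hempty => ?_,
      fun T₁ h₁ T₂ h₂ => ⟨T₁ ∩ T₂, ?_, subset_rfl⟩⟩, fun T hT => hT.exists_between hF⟩
    · obtain ⟨x, -, hx⟩ := hmeet univ hp.1.1.univ_mem
      exact FSeparated.subset hempty hx
    · simpa using h₁.inter h₂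
  obtain ⟨q, hq, hpq, h𝒯q⟩ := hp.1.exists_fUltrafilter_of_fBase h𝒯
    fun E hE T hT => (hmeet E hE).mono (inter_subset_inter_right E (FSeparated.subset hT))
  rw [← hp.2 q hq.1 hpq]
  exact Or.inl (h𝒯q h)

theorem FFilter.subset_of_hatF_subset (hF : IsClosed (F : Set (X →ᵇ ℂ))) {φ ψ : Set (Set X)}
    (hφ : FFilter F φ) (hψ : FFilter F ψ) (h : hatF F ψ ⊆ hatF F φ) : φ ⊆ ψ := by
  intro A hA
  by_contra hAψ
  obtain ⟨B, hB, hBA⟩ := hφ.exists_fSeparated hA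
  obtain ⟨D, hBD, hDA⟩ := hBA.exists_between hF
  have hmeet : ∀ E ∈ ψ, ∀ T ∈ compl '' {D | FSeparated F D A}, (E ∩ T).Nonempty := by
    rintro E hE _ ⟨D', hD', rfl⟩
    exact inter_compl_nonempty_iff.2 fun hED =>
      hAψ (hψ.1.mem_of_superset hE (hED.trans hD'.subset))
  have h𝒯 : FBase F (compl '' {D | FSeparated F D A}) := by
    refine ⟨⟨⟨Dᶜ, D, hDA, rfl⟩, fun hempty => ?_, ?_⟩, ?_⟩
    · simpa using hmeet univ hψ.1.univ_mem ∅ hempty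
    · rintro _ ⟨D₁, h₁, rfl⟩ _ ⟨D₂, h₂, rfl⟩
      exact ⟨(D₁ ∪ D₂)ᶜ, ⟨_, h₁.union h₂, rfl⟩, (compl_union D₁ D₂).subset⟩
    · rintro _ ⟨D', hD', rfl⟩
      obtain ⟨D'', hD'D'', hD''A⟩ := hD'.exists_between hF
      exact ⟨D''ᶜ, ⟨D'', hD''A, rfl⟩, hD'D''.compl⟩
  obtain ⟨q, hq, hψq, h𝒯q⟩ := hψ.exists_fUltrafilter_of_fBase h𝒯 hmeet
  have hBq : B ∈ q := h (show (⟨q, hq⟩ : Delta F) ∈ hatF F ψ from hψq) hB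
  exact hq.1.1.compl_notMem (hq.1.1.mem_of_superset hBq hBD.subset) (h𝒯q ⟨D, hDA, rfl⟩)

theorem FFilter.eq_of_hatF_eq (hF : IsClosed (F : Set (X →ᵇ ℂ))) {φ ψ : Set (Set X)}
    (hφ : FFilter F φ) (hψ : FFilter F ψ) (h : hatF F φ = hatF F ψ) : φ = ψ :=
  Subset.antisymm (hφ.subset_of_hatF_subset hF hψ h.symm.subset)
    (hψ.subset_of_hatF_subset hF hφ h.subset)

theorem Delta.isSetFilter (p : Delta F) : IsSetFilter p.1 := p.2.1.1

theorem hatSet_inter (A B : Set X) : hatSet F (A ∩ B) = hatSet F A ∩ hatSet F B := by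
  ext p
  exact ⟨fun h => ⟨p.isSetFilter.mem_of_superset h inter_subset_left,
    p.isSetFilter.mem_of_superset h inter_subset_right⟩, fun h => p.isSetFilter.inter_mem h.1 h.2⟩

theorem hatSet_univ : hatSet F (univ : Set X) = univ :=
  eq_univ_of_forall fun p => p.isSetFilter.univ_mem

theorem hatSet_empty : hatSet F (∅ : Set X) = ∅ :=
  eq_empty_of_forall_notMem fun p => p.isSetFilter.empty_notMem

theorem isTopologicalBasis_hatSet :
    TopologicalSpace.IsTopologicalBasis {S : Set (Delta F) | ∃ A, S = hatSet F A} := by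
  refine ⟨?_, sUnion_eq_univ_iff.2 fun p => ⟨_, ⟨univ, rfl⟩, p.isSetFilter.univ_mem⟩, rfl⟩
  rintro _ ⟨A, rfl⟩ _ ⟨B, rfl⟩ p hp
  exact ⟨hatSet F (A ∩ B), ⟨A ∩ B, rfl⟩, by rwa [hatSet_inter], (hatSet_inter A B).subset⟩

def limitBase (𝒰 : Ultrafilter (Delta F)) : Set (Set X) :=
  {A | ∃ B, FSeparated F B A ∧ hatSet F B ∈ 𝒰}

theorem fBase_limitBase (hF : IsClosed (F : Set (X →ᵇ ℂ))) (𝒰 : Ultrafilter (Delta F)) :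
    FBase F (limitBase 𝒰) := by
  refine ⟨⟨⟨univ, univ, fSeparated_univ univ, by rw [hatSet_univ]; exact Filter.univ_mem⟩,
    ?_, ?_⟩, ?_⟩
  · rintro ⟨B, hB, hB𝒰⟩
    rw [subset_empty_iff.1 hB.subset, hatSet_empty] at hB𝒰
    exact 𝒰.empty_notMem hB𝒰
  · rintro A₁ ⟨B₁, h₁, hB₁⟩ A₂ ⟨B₂, h₂, hB₂⟩
    refine ⟨A₁ ∩ A₂, ⟨B₁ ∩ B₂, h₁.inter h₂, ?_⟩, subset_rfl⟩
    rw [hatSet_inter]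
    exact Filter.inter_mem hB₁ hB₂
  · rintro A ⟨B, hBA, hB⟩
    obtain ⟨C, hBC, hCA⟩ := hBA.exists_between hF
    exact ⟨C, ⟨B, hBC, hB⟩, hCA⟩

theorem fUltrafilter_genFilter_limitBase (hF : IsClosed (F : Set (X →ᵇ ℂ)))
    (𝒰 : Ultrafilter (Delta F)) : FUltrafilter F (genFilter (limitBase 𝒰)) := by
  refine ⟨(fBase_limitBase hF 𝒰).fFilter_genFilter, fun ψ hψ hsub =>
    Subset.antisymm (fun A hA => ?_) hsub⟩
  obtain ⟨E, hE, hEA⟩ := hψ.exists_fSeparated hA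
  obtain ⟨C, hEC, hCA⟩ := hEA.exists_between hF
  obtain ⟨D, hED, hDC⟩ := hEC.exists_between hF
  have hcover : hatSet F C ∪ hatSet F Dᶜ = univ :=
    eq_univ_of_forall fun p => p.2.mem_or_compl_mem hF hDC
  rcases Ultrafilter.union_mem_iff.1 (hcover ▸ Filter.univ_mem) with hC | hD
  · exact subset_genFilter _ ⟨C, hCA, hC⟩
  · exact absurd (hsub (subset_genFilter _ ⟨Dᶜ, hED.compl, hD⟩)) (hψ.1.compl_notMem hE)

theorem compactSpace_delta (hF : IsClosed (F : Set (X →ᵇ ℂ))) : CompactSpace (Delta F) := by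
  refine ⟨isCompact_iff_ultrafilter_le_nhds.2 fun 𝒰 _ =>
    ⟨(⟨_, fUltrafilter_genFilter_limitBase hF 𝒰⟩ : Delta F), mem_univ _, ?_⟩⟩
  refine isTopologicalBasis_hatSet.nhds_hasBasis.ge_iff.2 ?_
  rintro _ ⟨⟨A, rfl⟩, A', ⟨B, hBA', hB⟩, hA'A⟩
  exact Filter.mem_of_superset hB fun p hp =>
    p.isSetFilter.mem_of_superset hp (hBA'.subset.trans hA'A)

def sInterDelta (C : Set (Delta F)) : Set (Set X) := {A | ∀ p ∈ C, A ∈ p.1}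

theorem fFilter_sInterDelta {C : Set (Delta F)} (hC : IsCompact C) (hne : C.Nonempty) :
    FFilter F (sInterDelta C) := by
  obtain ⟨p₀, hp₀⟩ := hne
  have huniv : univ ∈ sInterDelta C := fun p _ => p.isSetFilter.univ_mem
  refine ⟨⟨⟨univ, huniv⟩, fun A hA B hB p hp => p.isSetFilter.inter_mem (hA p hp) (hB p hp),
    fun A hA B hAB p hp => p.isSetFilter.mem_of_superset (hA p hp) hAB,
    fun h => p₀.isSetFilter.empty_notMem (h p₀ hp₀)⟩,
    ⟨univ, huniv⟩, fun A hA => p₀.2.1.nonempty_of_mem (hA p₀ hp₀), fun A hA _ => ?_⟩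
  choose! B hBp hBA using fun p (hp : p ∈ C) => p.2.1.exists_fSeparated (hA p hp)
  obtain ⟨t, htC, hcover⟩ := hC.elim_nhds_subcover (fun p => hatSet F (B p))
    fun p hp => (isTopologicalBasis_hatSet.isOpen ⟨B p, rfl⟩).mem_nhds (hBp p hp)
  refine ⟨⋃ p ∈ t, B p, fun p hp => ?_, fSeparated_biUnion t fun p hpt => hBA p (htC p hpt)⟩
  obtain ⟨p', hp't, hpp'⟩ := mem_iUnion₂.1 (hcover hp)
  exact p.isSetFilter.mem_of_superset hpp' (subset_biUnion_of_mem (u := B) hp't)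

theorem hatF_sInterDelta (hF : IsClosed (F : Set (X →ᵇ ℂ))) {C : Set (Delta F)}
    (hC : IsClosed C) : hatF F (sInterDelta C) = C := by
  refine Subset.antisymm (fun q hq => ?_) fun p hp A hA => hA p hp
  by_contra hqC
  obtain ⟨_, ⟨D, rfl⟩, hqD, hDC⟩ :=
    isTopologicalBasis_hatSet.exists_subset_of_mem_open hqC hC.isOpen_compl
  obtain ⟨E, hE, hED⟩ := q.2.1.exists_fSeparated hqD
  have hEc : Eᶜ ∈ sInterDelta C := fun p hp =>
    (p.2.mem_or_compl_mem hF hED).resolve_left fun hD => hDC hD hp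
  exact q.isSetFilter.compl_notMem hE (hq hEc)

end

theorem stmt12 (F : StarSubalgebra ℂ (BoundedContinuousFunction X ℂ)) (hF : IsClosed (F : Set (BoundedContinuousFunction X ℂ)))
    (C : Set (Delta F)) (hne : C.Nonempty) (hC : IsClosed C) :
    ∃! φ : Set (Set X), FFilter F φ ∧ hatF F φ = C := by
  have := compactSpace_delta hF
  have hφ := fFilter_sInterDelta hC.isCompact hne
  have hφC := hatF_sInterDelta hF hC
  exact ⟨sInterDelta C, ⟨hφ, hφC⟩, fun ψ ⟨hψ, hψC⟩ => hψ.eq_of_hatF_eq hF hφ (hψC.trans hφC.symm)⟩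
end

section
/- Let F₁ and F₂ be C*-subalgebras of ℓ∞(X) containing the constant functions, let δ₁X and δ₂X denote the spaces of F₁-ultrafilters and F₂-ultrafilters on X respectively, and let e₁ : X → δ₁X and e₂ : X → δ₂X be the respective evaluation maps. Then F₁ ⊆ F₂ if and only if there exists a continuous surjective mapping G : δ₂X → δ₁X such that e₁ = G ∘ e₂. -/
/-!
Every `F`-ultrafilter `p` has a limit `p.lim f` along each `f ∈ F`: a cluster value `z` of `f`
along `p` is a limit, because adjoining the sets `{x | ‖f x - z‖ ≤ ε}` to `p` still gives an
`F`-filter (closedness of `F` provides the Urysohn functions required), so by maximality they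
already lie in `p`. The maps `p ↦ p.lim f`, `f ∈ F`, are continuous, separate the points of `δX`
and induce its topology; `δX` is compact, and every filter along which all `f ∈ F` converge is
refined by an `F`-ultrafilter with the same limits. Hence `f ↦ (p ↦ p.lim f)` is an isometric
star homomorphism `F → C(δX)`, onto by Stone–Weierstrass, and `e x` realises evaluation at `x`.

If `F₁ ⊆ F₂`, let `G p` be an `F₁`-ultrafilter with the same limits on `F₁` as `p`. It is
continuous because `δ₁X` carries the topology induced by the limits, and surjective because each
`q ∈ δ₁X` is refined by an ultrafilter on `X` and hence by the limits of some `p ∈ δ₂X`.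
Conversely, if `e₁ = G ∘ e₂` with `G` continuous and `f ∈ F₁`, the continuous function
`p ↦ (G p).lim f` on `δ₂X` is the transform of some `g ∈ F₂`, and evaluating at `e₂ x` gives
`g = f`.
-/

open Set

variable {X : Type*} [Nonempty X] [TopologicalSpace X] [DiscreteTopology X]

open Filter Topology Metric
open scoped BoundedContinuousFunction

section

omit [Nonempty X] [DiscreteTopology X]

lemma tendsto_bind_of_tendsto {ι α E : Type*} [PseudoMetricSpace E] {U : Filter ι}
    {m : ι → Filter α} {u : α → E} {φ : ι → E} {z : E} (hm : ∀ i, Tendsto u (m i) (𝓝 (φ i)))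
    (hφ : Tendsto φ U (𝓝 z)) : Tendsto u (U.bind m) (𝓝 z) := by
  refine Metric.tendsto_nhds.2 fun ε hε => eventually_bind.2 ?_
  filter_upwards [Metric.tendsto_nhds.1 hφ (ε / 2) (half_pos hε)] with i hi
  filter_upwards [Metric.tendsto_nhds.1 (hm i) (ε / 2) (half_pos hε)] with a ha
  linarith [dist_triangle (u a) (φ i) z]

lemma Ultrafilter.exists_tendsto_of_norm_le {α E : Type*} [NormedAddCommGroup E] [ProperSpace E]
    (U : Ultrafilter α) {u : α → E} {C : ℝ} (hu : ∀ a, ‖u a‖ ≤ C) : ∃ z, Tendsto u U (𝓝 z) := by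
  obtain ⟨z, -, hz⟩ := (isCompact_closedBall (0 : E) C).ultrafilter_le_nhds (U.map u)
    (le_principal_iff.2 (Ultrafilter.mem_map.2 (univ_mem' fun a =>
      show u a ∈ closedBall 0 C from mem_closedBall_zero_iff.2 (hu a))))
  exact ⟨z, hz⟩

variable {F : StarSubalgebra ℂ (X →ᵇ ℂ)} {f g : X →ᵇ ℂ}

lemma BoundedContinuousFunction.aeval_apply (u : X →ᵇ ℂ) (Q : Polynomial ℂ) (x : X) :
    Polynomial.aeval u Q x = Q.eval (u x) := by
  simpa using (Polynomial.aeval_algHom_apply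
    ((ContinuousMap.evalAlgHom ℂ ℂ x).comp (BoundedContinuousFunction.toContinuousMapₐ ℂ)) u Q).symm

lemma mem_of_apply_eq_comp_normSq (hF : IsClosed (F : Set (X →ᵇ ℂ))) (hf : f ∈ F) {ψ : ℝ → ℝ}
    (hψ : Continuous ψ) (hg : ∀ x, g x = ψ (‖f x‖ ^ 2)) : g ∈ F := by
  refine hF.closure_subset (Metric.mem_closure_iff.2 fun ε hε => ?_)
  obtain ⟨P, hP⟩ := exists_polynomial_near_of_continuousOn 0 (‖f‖ ^ 2) ψ hψ.continuousOn
    (ε / 2) (half_pos hε)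
  let u : F := ⟨star f * f, mul_mem (star_mem hf) hf⟩
  refine ⟨Polynomial.aeval (u : X →ᵇ ℂ) (P.map (algebraMap ℝ ℂ)), ?_, ?_⟩
  · rw [← Polynomial.aeval_subalgebra_coe]
    exact SetLike.coe_mem _
  refine lt_of_le_of_lt ((BoundedContinuousFunction.dist_le (half_pos hε).le).2 fun x => ?_)
    (half_lt_self hε)
  have hux : (u : X →ᵇ ℂ) x = ((‖f x‖ ^ 2 : ℝ) : ℂ) := by
    simp [u, RCLike.conj_mul]
  have ht : ‖f x‖ ^ 2 ∈ Icc 0 (‖f‖ ^ 2) :=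
    ⟨by positivity, pow_le_pow_left₀ (norm_nonneg _) (f.norm_coe_le_norm x) 2⟩
  have hPx : Polynomial.aeval ((‖f x‖ ^ 2 : ℝ) : ℂ) P = ((P.eval (‖f x‖ ^ 2) : ℝ) : ℂ) :=
    Polynomial.aeval_ofReal P _
  rw [hg, BoundedContinuousFunction.aeval_apply, hux, Polynomial.eval_map_algebraMap, hPx,
    dist_eq_norm, ← Complex.ofReal_sub, Complex.norm_real,
    Real.norm_eq_abs, abs_sub_comm]
  exact (hP _ ht).le

lemma exists_urysohn_mem [DiscreteTopology X] (hF : IsClosed (F : Set (X →ᵇ ℂ)))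
    (hf : f ∈ F) {r s : ℝ} (hr : 0 ≤ r) (hrs : r < s) :
    ∃ g ∈ F, (∀ x, ‖f x‖ ≤ r → g x = 0) ∧ ∀ x, s ≤ ‖f x‖ → g x = 1 := by
  set ψ : ℝ → ℝ := fun t => max 0 (min ((t - r ^ 2) / (s ^ 2 - r ^ 2)) 1)
  have hψ : ∀ t, ‖(ψ t : ℂ)‖ ≤ 1 := fun t => by
    rw [Complex.norm_real, Real.norm_eq_abs, abs_of_nonneg (le_max_left _ _)]
    exact max_le zero_le_one (min_le_right _ _)
  have hrs2 : 0 < s ^ 2 - r ^ 2 := by nlinarith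
  refine ⟨.ofNormedAddCommGroupDiscrete (fun x => (ψ (‖f x‖ ^ 2) : ℂ)) 1 fun x => hψ _,
    mem_of_apply_eq_comp_normSq hF hf (by fun_prop) fun x => rfl, fun x hx => ?_, fun x hx => ?_⟩
  · have : ‖f x‖ ^ 2 ≤ r ^ 2 := pow_le_pow_left₀ (norm_nonneg _) hx 2
    have : (‖f x‖ ^ 2 - r ^ 2) / (s ^ 2 - r ^ 2) ≤ 0 :=
      div_nonpos_of_nonpos_of_nonneg (by linarith) hrs2.le
    simp [ψ, this]
  · have : s ^ 2 ≤ ‖f x‖ ^ 2 := pow_le_pow_left₀ (hr.trans hrs.le) hx 2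
    have : 1 ≤ (‖f x‖ ^ 2 - r ^ 2) / (s ^ 2 - r ^ 2) := (one_le_div hrs2).2 (by linarith)
    simp [ψ, this]

def FSeparates (F : StarSubalgebra ℂ (X →ᵇ ℂ)) (B A : Set X) : Prop :=
  ∃ g ∈ F, (∀ x ∈ B, g x = 0) ∧ ∀ x ∉ A, g x = 1

lemma fSeparates_univ (B : Set X) : FSeparates F B univ :=
  ⟨0, zero_mem F, fun _ _ => rfl, fun x hx => (hx (mem_univ x)).elim⟩

lemma FSeparates.mono {A A' B B' : Set X} (h : FSeparates F B A) (hB : B' ⊆ B) (hA : A ⊆ A') :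
    FSeparates F B' A' :=
  let ⟨g, hg, hg0, hg1⟩ := h
  ⟨g, hg, fun x hx => hg0 x (hB hx), fun x hx => hg1 x fun h => hx (hA h)⟩

/-- Separated by `g₁ + g₂ - g₁ * g₂ = 1 - (1 - g₁) * (1 - g₂)`. -/
lemma FSeparates.inter {A₁ A₂ B₁ B₂ : Set X} (h₁ : FSeparates F B₁ A₁) (h₂ : FSeparates F B₂ A₂) :
    FSeparates F (B₁ ∩ B₂) (A₁ ∩ A₂) := by
  obtain ⟨g₁, hg₁, hg₁0, hg₁1⟩ := h₁
  obtain ⟨g₂, hg₂, hg₂0, hg₂1⟩ := h₂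
  refine ⟨g₁ + g₂ - g₁ * g₂, sub_mem (add_mem hg₁ hg₂) (mul_mem hg₁ hg₂), ?_, ?_⟩
  · rintro x ⟨hx₁, hx₂⟩
    simp [hg₁0 x hx₁, hg₂0 x hx₂]
  · intro x hx
    rcases not_and_or.1 hx with hx | hx
    · simp [hg₁1 x hx]
    · simp [hg₂1 x hx]

lemma fSeparates_preimage_closedBall [DiscreteTopology X] (hF : IsClosed (F : Set (X →ᵇ ℂ)))
    (hf : f ∈ F) (z : ℂ) {r s : ℝ} (hr : 0 ≤ r) (hrs : r < s) :
    FSeparates F (f ⁻¹' closedBall z r) (f ⁻¹' closedBall z s) := by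
  have hfz : f - algebraMap ℂ (X →ᵇ ℂ) z ∈ F := sub_mem hf (F.algebraMap_mem z)
  have hdist : ∀ x, ‖(f - algebraMap ℂ (X →ᵇ ℂ) z) x‖ = dist (f x) z := fun x => by
    simp [dist_eq_norm, BoundedContinuousFunction.algebraMap_apply]
  obtain ⟨g, hg, hg0, hg1⟩ := exists_urysohn_mem hF hfz hr hrs
  exact ⟨g, hg, fun x hx => hg0 x ((hdist x).trans_le hx),
    fun x hx => hg1 x ((hdist x).symm ▸ (not_le.1 hx).le)⟩

def FRegular (F : StarSubalgebra ℂ (X →ᵇ ℂ)) (l : Filter X) : Prop :=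
  ∀ A ∈ l, ∃ B ∈ l, FSeparates F B A

lemma FRegular.inf {l₁ l₂ : Filter X} (h₁ : FRegular F l₁) (h₂ : FRegular F l₂) :
    FRegular F (l₁ ⊓ l₂) := by
  intro A hA
  obtain ⟨A₁, hA₁, A₂, hA₂, hA⟩ := mem_inf_iff_superset.1 hA
  obtain ⟨B₁, hB₁, hs₁⟩ := h₁ A₁ hA₁
  obtain ⟨B₂, hB₂, hs₂⟩ := h₂ A₂ hA₂
  exact ⟨B₁ ∩ B₂, inter_mem_inf hB₁ hB₂, (hs₁.inter hs₂).mono subset_rfl hA⟩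

lemma FRegular.iInf {ι : Type*} {l : ι → Filter X} (h : ∀ i, FRegular F (l i)) :
    FRegular F (⨅ i, l i) := by
  intro A hA
  refine iInf_sets_induct (p := fun A => ∃ B ∈ ⨅ i, l i, FSeparates F B A) hA
    ⟨univ, univ_mem, fSeparates_univ univ⟩ ?_
  rintro i A₁ A₂ hA₁ ⟨B₂, hB₂, hs₂⟩
  obtain ⟨B₁, hB₁, hs₁⟩ := h i A₁ hA₁
  exact ⟨B₁ ∩ B₂, inter_mem (mem_iInf_of_mem i hB₁) hB₂, hs₁.inter hs₂⟩

lemma fRegular_comap_nhds [DiscreteTopology X] (hF : IsClosed (F : Set (X →ᵇ ℂ))) (hf : f ∈ F)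
    (z : ℂ) : FRegular F (comap f (𝓝 z)) := by
  intro A hA
  obtain ⟨ε, hε, hA⟩ := (nhds_basis_closedBall.comap f).mem_iff.1 hA
  exact ⟨f ⁻¹' closedBall z (ε / 2), preimage_mem_comap (closedBall_mem_nhds z (half_pos hε)),
    (fSeparates_preimage_closedBall hF hf z (half_pos hε).le (half_lt_self hε)).mono subset_rfl hA⟩

lemma fFilter_sets_of_fRegular (l : Filter X) [l.NeBot] (hl : FRegular F l) : FFilter F l.sets :=
  ⟨⟨⟨univ, univ_mem⟩, fun _ hA _ hB => inter_mem hA hB, fun _ hA _ hAB => mem_of_superset hA hAB,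
    empty_notMem l⟩, ⟨univ, univ_mem⟩, fun _ hA => nonempty_of_mem hA, fun A hA _ => hl A hA⟩

lemma FFilter.sUnion_of_isChain {c : Set (Set (Set X))} (hc : ∀ φ ∈ c, FFilter F φ)
    (hchain : IsChain (· ⊆ ·) c) (hne : c.Nonempty) : FFilter F (⋃₀ c) := by
  obtain ⟨φ₀, hφ₀⟩ := hne
  have huniv : univ ∈ ⋃₀ c := by
    obtain ⟨A, hA⟩ := (hc φ₀ hφ₀).1.1
    exact ⟨φ₀, hφ₀, (hc φ₀ hφ₀).1.2.2.1 A hA univ (subset_univ A)⟩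
  refine ⟨⟨⟨univ, huniv⟩, ?_, ?_, ?_⟩, ⟨univ, huniv⟩, ?_, ?_⟩
  · rintro A ⟨φ, hφ, hA⟩ B ⟨ψ, hψ, hB⟩
    rcases hchain.total hφ hψ with h | h
    · exact ⟨ψ, hψ, (hc ψ hψ).1.2.1 A (h hA) B hB⟩
    · exact ⟨φ, hφ, (hc φ hφ).1.2.1 A hA B (h hB)⟩
  · rintro A ⟨φ, hφ, hA⟩ B hAB
    exact ⟨φ, hφ, (hc φ hφ).1.2.2.1 A hA B hAB⟩
  · rintro ⟨φ, hφ, h⟩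
    exact (hc φ hφ).1.2.2.2 h
  · rintro A ⟨φ, hφ, hA⟩
    exact (hc φ hφ).2.2.1 A hA
  · rintro A ⟨φ, hφ, hA⟩ hAu
    obtain ⟨B, hB, hsep⟩ := (hc φ hφ).2.2.2 A hA hAu
    exact ⟨B, ⟨φ, hφ, hB⟩, hsep⟩

lemma FFilter.exists_fUltrafilter_ge {φ : Set (Set X)} (h : FFilter F φ) :
    ∃ ψ, FUltrafilter F ψ ∧ φ ⊆ ψ := by
  obtain ⟨ψ, hφψ, hmax⟩ := zorn_subset_nonempty {ψ | FFilter F ψ}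
    (fun c hc hchain hne =>
      ⟨⋃₀ c, FFilter.sUnion_of_isChain hc hchain hne, fun _ => subset_sUnion_of_mem⟩) φ h
  exact ⟨ψ, ⟨hmax.prop, fun ψ' hψ' hψψ' => (hmax.eq_of_subset hψ' hψψ').symm⟩, hφψ⟩

namespace Delta

def toFilter (p : Delta F) : Filter X where
  sets := p.1
  univ_sets := let ⟨A, hA⟩ := p.2.1.1.1; p.2.1.1.2.2.1 A hA univ (subset_univ A)
  sets_of_superset hA hAB := p.2.1.1.2.2.1 _ hA _ hAB
  inter_sets hA hB := p.2.1.1.2.1 _ hA _ hB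

instance (p : Delta F) : p.toFilter.NeBot :=
  ⟨fun h => p.2.1.1.2.2.2 (show ∅ ∈ p.toFilter from h ▸ mem_bot)⟩

lemma fRegular (p : Delta F) : FRegular F p.toFilter := by
  intro A hA
  by_cases hAu : A = univ
  · subst hAu
    exact ⟨univ, univ_mem, fSeparates_univ univ⟩
  · exact p.2.1.2.2.2 A hA hAu

lemma toFilter_le_of_le (p : Delta F) {l : Filter X} [l.NeBot] (hl : FRegular F l)
    (h : l ≤ p.toFilter) : p.toFilter ≤ l := fun A hA =>
  show A ∈ p.1 from p.2.2 l.sets (fFilter_sets_of_fRegular l hl) h ▸ hA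

/-- The value at `p` of the extension of `f` to `δX`; a junk value unless `f` converges along `p`,
as every `f ∈ F` does (`Delta.tendsto_lim`). -/
noncomputable def lim (p : Delta F) (f : X →ᵇ ℂ) : ℂ := limUnder p.toFilter f

lemma lim_eq_of_tendsto {p : Delta F} {z : ℂ} (h : Tendsto f p.toFilter (𝓝 z)) : p.lim f = z :=
  h.limUnder_eq

lemma lim_eq_of_forall_mem {p : Delta F} {B : Set X} {c : ℂ} (hB : B ∈ p.toFilter)
    (h : ∀ x ∈ B, f x = c) : p.lim f = c :=
  lim_eq_of_tendsto (tendsto_const_nhds.congr' (eventuallyEq_of_mem hB fun x hx => (h x hx).symm))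

/-- A cluster value `z` of `f` along `p` is a limit: adjoining the sets `f ⁻¹' closedBall z ε`
to `p` keeps it an `F`-filter, so by maximality they already belong to `p`. -/
lemma tendsto_lim [DiscreteTopology X] (hF : IsClosed (F : Set (X →ᵇ ℂ))) (p : Delta F)
    (hf : f ∈ F) : Tendsto f p.toFilter (𝓝 (p.lim f)) := by
  obtain ⟨z, -, hz⟩ := (isCompact_closedBall (0 : ℂ) ‖f‖).exists_mapClusterPt (f := p.toFilter)
    (u := f) (le_principal_iff.2 (mem_map.2 (univ_mem' fun x =>
      show f x ∈ closedBall 0 ‖f‖ from mem_closedBall_zero_iff.2 (f.norm_coe_le_norm x))))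
  have : (p.toFilter ⊓ comap f (𝓝 z)).NeBot := neBot_inf_comap_iff_map.2 (by rwa [inf_comm])
  have hle := p.toFilter_le_of_le (p.fRegular.inf (fRegular_comap_nhds hF hf z)) inf_le_left
  exact tendsto_nhds_limUnder ⟨z, tendsto_iff_comap.2 (hle.trans inf_le_right)⟩

lemma norm_lim_le [DiscreteTopology X] (hF : IsClosed (F : Set (X →ᵇ ℂ))) (p : Delta F)
    (hf : f ∈ F) : ‖p.lim f‖ ≤ ‖f‖ :=
  mem_closedBall_zero_iff.1 <| isClosed_closedBall.mem_of_tendsto (p.tendsto_lim hF hf)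
    (univ_mem' fun x => mem_closedBall_zero_iff.2 (f.norm_coe_le_norm x))

/-- The filter generated by the sets `f ⁻¹' closedBall (χ f) ε`, `f ∈ F`, is `F`-regular and
coarser than `l`; any `F`-ultrafilter refining it has the limits `χ`. -/
lemma exists_lim_eq [DiscreteTopology X] (hF : IsClosed (F : Set (X →ᵇ ℂ))) (l : Filter X)
    [l.NeBot] (χ : (X →ᵇ ℂ) → ℂ) (hχ : ∀ f ∈ F, Tendsto f l (𝓝 (χ f))) :
    ∃ p : Delta F, ∀ f ∈ F, p.lim f = χ f := by
  set l' := ⨅ f : F, comap ⇑(f : X →ᵇ ℂ) (𝓝 (χ f))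
  have hll' : l ≤ l' := le_iInf fun f => (hχ f f.2).le_comap
  have := neBot_of_le hll'
  obtain ⟨ψ, hψ, hl'ψ⟩ := (fFilter_sets_of_fRegular l'
    (FRegular.iInf fun f => fRegular_comap_nhds hF f.2 _)).exists_fUltrafilter_ge
  have hψl' : toFilter ⟨ψ, hψ⟩ ≤ l' := fun A hA => hl'ψ hA
  exact ⟨⟨ψ, hψ⟩, fun f hf =>
    lim_eq_of_tendsto (tendsto_iff_comap.2 (hψl'.trans (iInf_le _ (⟨f, hf⟩ : F))))⟩

lemma mem_hatSet {p : Delta F} {A : Set X} : p ∈ hatSet F A ↔ A ∈ p.toFilter := Iff.rfl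

lemma isTopologicalBasis_hatSet :
    TopologicalSpace.IsTopologicalBasis {S : Set (Delta F) | ∃ A : Set X, S = hatSet F A} where
  exists_subset_inter := by
    rintro _ ⟨A, rfl⟩ _ ⟨B, rfl⟩ p hp
    refine ⟨hatSet F (A ∩ B), ⟨A ∩ B, rfl⟩, mem_hatSet.2 (inter_mem hp.1 hp.2), fun q hq => ?_⟩
    exact ⟨mem_hatSet.2 (mem_of_superset (mem_hatSet.1 hq) inter_subset_left),
      mem_hatSet.2 (mem_of_superset (mem_hatSet.1 hq) inter_subset_right)⟩
  sUnion_eq := sUnion_eq_univ_iff.2 fun p => ⟨hatSet F univ, ⟨univ, rfl⟩, mem_hatSet.2 univ_mem⟩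
  eq_generateFrom := rfl

lemma hasBasis_nhds (p : Delta F) : (𝓝 p).HasBasis (· ∈ p.toFilter) (hatSet F) :=
  ⟨fun s => by
    rw [isTopologicalBasis_hatSet.nhds_hasBasis.mem_iff]
    constructor
    · rintro ⟨_, ⟨⟨A, rfl⟩, hA⟩, hs⟩
      exact ⟨A, hA, hs⟩
    · rintro ⟨A, hA, hs⟩
      exact ⟨hatSet F A, ⟨⟨A, rfl⟩, hA⟩, hs⟩⟩

lemma continuous_lim [DiscreteTopology X] (hF : IsClosed (F : Set (X →ᵇ ℂ))) (hf : f ∈ F) :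
    Continuous fun p : Delta F => p.lim f :=
  continuous_iff_continuousAt.2 fun p =>
    ((hasBasis_nhds p).tendsto_iff nhds_basis_closedBall).2 fun ε hε =>
      ⟨f ⁻¹' closedBall (p.lim f) ε, p.tendsto_lim hF hf (closedBall_mem_nhds _ hε),
        fun q hq => isClosed_closedBall.mem_of_tendsto (q.tendsto_lim hF hf) hq⟩

/-- Every basic neighbourhood `Â` of `p` contains a neighbourhood of `p` for the topology
induced by the maps `q ↦ q.lim g`, `g ∈ F`. -/
lemma exists_lim_eq_zero_of_mem [DiscreteTopology X] (hF : IsClosed (F : Set (X →ᵇ ℂ)))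
    {p : Delta F} {A : Set X} (hA : A ∈ p.toFilter) :
    ∃ g ∈ F, p.lim g = 0 ∧ ∀ q : Delta F, ‖q.lim g‖ < 1 → q ∈ hatSet F A := by
  obtain ⟨B, hB, g, hg, hg0, hg1⟩ := p.fRegular A hA
  refine ⟨g, hg, lim_eq_of_forall_mem hB hg0, fun q hq => mem_hatSet.2 ?_⟩
  filter_upwards [(q.tendsto_lim hF hg).eventually_mem
    (isOpen_ball.mem_nhds (mem_ball_zero_iff.2 hq))] with x hx
  by_contra hxA
  simp [hg1 x hxA] at hx

lemma ext_lim [DiscreteTopology X] (hF : IsClosed (F : Set (X →ᵇ ℂ))) {p q : Delta F}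
    (h : ∀ f ∈ F, p.lim f = q.lim f) : p = q := by
  by_contra hpq
  obtain ⟨A, hAp, hAq⟩ : ∃ A ∈ p.toFilter, A ∉ q.toFilter := by
    by_contra! hpq'
    exact hpq (Subtype.ext (p.2.2 q.1 q.2.1 hpq').symm)
  obtain ⟨g, hg, hpg, hA⟩ := exists_lim_eq_zero_of_mem hF hAp
  exact hAq (hA q (by simp [← h g hg, hpg]))

lemma tendsto_nhds_iff [DiscreteTopology X] (hF : IsClosed (F : Set (X →ᵇ ℂ))) {α : Type*}
    {l : Filter α} {φ : α → Delta F} {p : Delta F} :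
    Tendsto φ l (𝓝 p) ↔ ∀ f ∈ F, Tendsto (fun a => (φ a).lim f) l (𝓝 (p.lim f)) := by
  refine ⟨fun h f hf => ((continuous_lim hF hf).tendsto p).comp h, fun h => ?_⟩
  refine (hasBasis_nhds p).tendsto_right_iff.2 fun A hA => ?_
  obtain ⟨g, hg, hpg, hA⟩ := exists_lim_eq_zero_of_mem hF hA
  have := h g hg
  rw [hpg] at this
  exact (this.eventually_mem (ball_mem_nhds 0 one_pos)).mono fun a ha =>
    hA (φ a) (mem_ball_zero_iff.1 ha)

/-- Given an ultrafilter `U` on `δX`, the sets `A` with `Â ∈ U` form a filter along which every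
`f ∈ F` tends to the `U`-limit of `q ↦ q.lim f`; an `F`-ultrafilter with these limits is a limit
of `U`. -/
lemma compactSpace [DiscreteTopology X] (hF : IsClosed (F : Set (X →ᵇ ℂ))) :
    CompactSpace (Delta F) := by
  refine ⟨isCompact_iff_ultrafilter_le_nhds.2 fun U _ => ?_⟩
  have : ∀ f ∈ F, ∃ z, Tendsto (fun q : Delta F => q.lim f) U (𝓝 z) := fun f hf =>
    U.exists_tendsto_of_norm_le fun q => q.norm_lim_le hF hf
  choose! χ hχ using this
  have : ((U : Filter (Delta F)).bind toFilter).NeBot :=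
    (frequently_true_iff_neBot _).1 (frequently_bind.2 (.of_forall fun q =>
      (frequently_true_iff_neBot _).2 inferInstance))
  obtain ⟨p, hp⟩ := exists_lim_eq hF _ χ fun f hf =>
    tendsto_bind_of_tendsto (fun q => q.tendsto_lim hF hf) (hχ f hf)
  exact ⟨p, mem_univ p, (tendsto_nhds_iff hF (φ := id)).2 fun f hf => hp f hf ▸ hχ f hf⟩

lemma lim_eq_apply {p : Delta F} {x : X} (hp : p.1 = {A : Set X | A ∈ @nhds X (tauF F) x})
    (hf : f ∈ F) : p.lim f = f x := by
  have hcont : Continuous[tauF F, _] f :=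
    continuous_iInf_dom (i := f) (continuous_iInf_dom (i := hf) continuous_induced_dom)
  have hpx : p.toFilter = @nhds X (tauF F) x := Filter.ext fun A => Set.ext_iff.1 hp A
  exact lim_eq_of_tendsto (hpx ▸ @Continuous.tendsto X ℂ (tauF F) _ f hcont x)

end Delta

noncomputable def gelfand (hF : IsClosed (F : Set (X →ᵇ ℂ))) : F →⋆ₐ[ℂ] C(Delta F, ℂ) where
  toFun f := ⟨fun p => p.lim f, Delta.continuous_lim hF f.2⟩
  map_one' := ContinuousMap.ext fun _ => Delta.lim_eq_of_tendsto tendsto_const_nhds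
  map_mul' f g := ContinuousMap.ext fun p =>
    Delta.lim_eq_of_tendsto ((p.tendsto_lim hF f.2).mul (p.tendsto_lim hF g.2))
  map_zero' := ContinuousMap.ext fun _ => Delta.lim_eq_of_tendsto tendsto_const_nhds
  map_add' f g := ContinuousMap.ext fun p =>
    Delta.lim_eq_of_tendsto ((p.tendsto_lim hF f.2).add (p.tendsto_lim hF g.2))
  commutes' c := ContinuousMap.ext fun _ => Delta.lim_eq_of_tendsto
    (tendsto_const_nhds.congr fun x => by simp [BoundedContinuousFunction.algebraMap_apply])
  map_star' f := ContinuousMap.ext fun p => Delta.lim_eq_of_tendsto (p.tendsto_lim hF f.2).star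

lemma gelfand_apply [DiscreteTopology X] (hF : IsClosed (F : Set (X →ᵇ ℂ))) (f : F) (p : Delta F) :
    gelfand hF f p = p.lim f := rfl

lemma norm_gelfand [DiscreteTopology X] [CompactSpace (Delta F)]
    (hF : IsClosed (F : Set (X →ᵇ ℂ))) (f : F) : ‖gelfand hF f‖ = ‖f‖ := by
  refine le_antisymm ((ContinuousMap.norm_le _ (norm_nonneg _)).2 fun p => p.norm_lim_le hF f.2)
    ((BoundedContinuousFunction.norm_le (norm_nonneg _)).2 fun x => ?_)
  obtain ⟨p, hp⟩ := Delta.exists_lim_eq hF (pure x) (fun g => g x) fun g _ => tendsto_pure_nhds _ _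
  show ‖(f : X →ᵇ ℂ) x‖ ≤ _
  rw [← hp f f.2]
  exact (gelfand hF f).norm_coe_le_norm p

/-- The Gelfand transform is isometric, hence has closed range, and its range separates points,
hence is dense by Stone–Weierstrass. -/
lemma gelfand_surjective [DiscreteTopology X] (hF : IsClosed (F : Set (X →ᵇ ℂ))) :
    Function.Surjective (gelfand hF) := by
  have := Delta.compactSpace hF
  have : CompleteSpace F := hF.isComplete.completeSpace_coe
  have hclosed : IsClosed (range (gelfand hF)) :=
    (AddMonoidHomClass.isometry_of_norm _ (norm_gelfand hF)).isClosedEmbedding.isClosed_range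
  have hsep : (gelfand hF).range.SeparatesPoints := by
    intro p q hpq
    obtain ⟨f, hf, hfpq⟩ : ∃ f ∈ F, p.lim f ≠ q.lim f := by
      by_contra! h
      exact hpq (Delta.ext_lim hF h)
    exact ⟨_, ⟨_, ⟨⟨f, hf⟩, rfl⟩, rfl⟩, hfpq⟩
  have hdense := congrArg (fun S : StarSubalgebra ℂ C(Delta F, ℂ) => (S : Set C(Delta F, ℂ))) <|
    ContinuousMap.starSubalgebra_topologicalClosure_eq_top_of_separatesPoints _ hsep
  rw [StarSubalgebra.topologicalClosure_coe] at hdense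
  rw [← range_eq_univ, ← hclosed.closure_eq]
  exact hdense

section Restriction

variable [DiscreteTopology X] {F₁ F₂ : StarSubalgebra ℂ (X →ᵇ ℂ)}
  (hF₁ : IsClosed (F₁ : Set (X →ᵇ ℂ))) (hF₂ : IsClosed (F₂ : Set (X →ᵇ ℂ)))
  (hsub : (F₁ : Set (X →ᵇ ℂ)) ⊆ F₂) {G : Delta F₂ → Delta F₁}
  (hG : ∀ p, ∀ f ∈ F₁, (G p).lim f = p.lim f)

include hF₁ hF₂ hsub hG

lemma Delta.continuous_of_lim_eq : Continuous G :=
  continuous_iff_continuousAt.2 fun p => (Delta.tendsto_nhds_iff hF₁).2 fun f hf => by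
    rw [funext fun a => hG a f hf, hG p f hf]
    exact (Delta.continuous_lim hF₂ (hsub hf)).continuousAt

lemma Delta.surjective_of_lim_eq : Function.Surjective G := by
  intro q
  set U := Ultrafilter.of q.toFilter
  have : ∀ g ∈ F₂, ∃ z, Tendsto g U (𝓝 z) := fun g _ =>
    U.exists_tendsto_of_norm_le g.norm_coe_le_norm
  choose! χ hχ using this
  obtain ⟨p, hp⟩ := Delta.exists_lim_eq hF₂ U χ hχ
  refine ⟨p, Delta.ext_lim hF₁ fun f hf => ?_⟩
  rw [hG p f hf, hp f (hsub hf)]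
  exact tendsto_nhds_unique (hχ f (hsub hf))
    ((q.tendsto_lim hF₁ hf).mono_left (Ultrafilter.of_le _))

end Restriction

lemma subset_of_continuous_of_eq_comp [DiscreteTopology X] {F₁ F₂ : StarSubalgebra ℂ (X →ᵇ ℂ)}
    (hF₁ : IsClosed (F₁ : Set (X →ᵇ ℂ))) (hF₂ : IsClosed (F₂ : Set (X →ᵇ ℂ)))
    {e₁ : X → Delta F₁} (he₁ : ∀ x : X, (e₁ x).1 = {A : Set X | A ∈ @nhds X (tauF F₁) x})
    {e₂ : X → Delta F₂} (he₂ : ∀ x : X, (e₂ x).1 = {A : Set X | A ∈ @nhds X (tauF F₂) x})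
    {G : Delta F₂ → Delta F₁} (hG : Continuous G) (he : e₁ = G ∘ e₂) :
    (F₁ : Set (X →ᵇ ℂ)) ⊆ F₂ := by
  intro f hf
  obtain ⟨g, hg⟩ :=
    gelfand_surjective hF₂ ⟨fun p => (G p).lim f, (Delta.continuous_lim hF₁ hf).comp hG⟩
  have hgf : (g : X →ᵇ ℂ) = f := by
    ext x
    have := DFunLike.congr_fun hg (e₂ x)
    rwa [gelfand_apply, Delta.lim_eq_apply (he₂ x) g.2, ContinuousMap.coe_mk,
      ← Function.comp_apply (f := G), ← he, Delta.lim_eq_apply (he₁ x) hf] at this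
  exact hgf ▸ g.2

end

theorem stmt16 (F₁ F₂ : StarSubalgebra ℂ (BoundedContinuousFunction X ℂ))
    (hF₁ : IsClosed (F₁ : Set (BoundedContinuousFunction X ℂ))) (hF₂ : IsClosed (F₂ : Set (BoundedContinuousFunction X ℂ)))
    (e₁ : X → Delta F₁) (he₁ : ∀ x : X, (e₁ x).1 = {A : Set X | A ∈ @nhds X (tauF F₁) x})
    (e₂ : X → Delta F₂) (he₂ : ∀ x : X, (e₂ x).1 = {A : Set X | A ∈ @nhds X (tauF F₂) x}) :
    (F₁ : Set (BoundedContinuousFunction X ℂ)) ⊆ (F₂ : Set (BoundedContinuousFunction X ℂ)) ↔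
      ∃ G : Delta F₂ → Delta F₁, Continuous G ∧ Function.Surjective G ∧ e₁ = G ∘ e₂ := by
  refine ⟨fun hsub => ?_, fun ⟨G, hG, _, he⟩ =>
    subset_of_continuous_of_eq_comp hF₁ hF₂ he₁ he₂ hG he⟩
  choose G hG using fun p : Delta F₂ =>
    Delta.exists_lim_eq hF₁ p.toFilter (fun f => p.lim f) fun f hf => p.tendsto_lim hF₂ (hsub hf)
  refine ⟨G, Delta.continuous_of_lim_eq hF₁ hF₂ hsub hG, Delta.surjective_of_lim_eq hF₁ hF₂ hsub hG,
    funext fun x => Delta.ext_lim hF₁ fun f hf => ?_⟩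
  rw [Function.comp_apply, hG _ f hf, Delta.lim_eq_apply (he₁ x) hf,
    Delta.lim_eq_apply (he₂ x) (hsub hf)]
end
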